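/- Let L₁, L₂ > 0, let q₁, q₂ : ℝ → ℝ be continuous with qᵢ Lᵢ-periodic, and let λ₁ ≤ 0 and λ₂ < 0. Suppose φ₁ : ℝ → ℝ is C², L₁-periodic, strictly positive, with φ₁'' + q₁φ₁ + λ₁φ₁ = 0, and φ₂ : ℝ → ℝ is C², L₂-periodic, not identically zero, with φ₂'' + q₂φ₂ + λ₂φ₂ = 0. Then there exist C² functions u₁, u₂ : ℝ → ℝ with uᵢ Lᵢ-periodic, not both identically zero, such that ∫₀^{L₁} u₁ + ∫₀^{L₂} u₂ = 0 and ∫₀^{L₁}(u₁'² − q₁u₁²) + ∫₀^{L₂}(u₂'² − q₂u₂²) < 0. -/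

import Mathlib

/-!
Integrating by parts over a period, the index form of an eigenfunction `φ` with eigenvalue `λ`
equals `λ ∫ φ²`. Since `φ₁ > 0` has positive mean, a multiple `c φ₁` cancels the mean of `φ₂`,
and the pair `(c φ₁, φ₂)` has index form `c² λ₁ ∫ φ₁² + λ₂ ∫ φ₂² < 0`.
-/

open intervalIntegral

noncomputable def indexForm (L : ℝ) (q u : ℝ → ℝ) : ℝ :=
  ∫ s in (0:ℝ)..L, (deriv u s ^ 2 - q s * u s ^ 2)

theorem Function.Periodic.deriv {𝕜 F : Type*} [NontriviallyNormedField 𝕜] [NormedAddCommGroup F]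
    [NormedSpace 𝕜 F] {f : 𝕜 → F} {L : 𝕜} (h : Function.Periodic f L) :
    Function.Periodic (deriv f) L := fun x => by
  rw [← deriv_comp_add_const, show (fun y => f (y + L)) = f from funext h]

theorem integral_sq_pos_of_periodic {u : ℝ → ℝ} {L : ℝ} (hL : 0 < L) (hu : Continuous u)
    (hp : Function.Periodic u L) (hne : ∃ s, u s ≠ 0) :
    0 < ∫ s in (0:ℝ)..L, u s ^ 2 := by
  obtain ⟨s, hs⟩ := hne
  obtain ⟨t, ht, hts⟩ := hp.exists_mem_Ico₀ hL s
  simpa using integral_lt_integral_of_continuousOn_of_le_of_exists_lt hL continuousOn_const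
    (hu.pow 2).continuousOn (fun x _ => sq_nonneg (u x))
    ⟨t, Set.Ico_subset_Icc_self ht, sq_pos_of_ne_zero (hts ▸ hs)⟩

/-- Integration by parts; the boundary term `u u'` vanishes by periodicity. -/
theorem integral_deriv_sq_of_periodic {u : ℝ → ℝ} {L : ℝ} (hu : ContDiff ℝ 2 u)
    (hp : Function.Periodic u L) :
    ∫ s in (0:ℝ)..L, deriv u s ^ 2 = -∫ s in (0:ℝ)..L, u s * deriv (deriv u) s := by
  have hu' : ContDiff ℝ 1 (deriv u) := hu.deriv'
  rw [integral_mul_deriv_eq_deriv_mul (fun x _ => (hu.differentiable two_ne_zero x).hasDerivAt)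
      (fun x _ => (hu.differentiable_deriv_two x).hasDerivAt)
      (hu'.continuous.intervalIntegrable 0 L)
      ((hu'.continuous_deriv le_rfl).intervalIntegrable 0 L)]
  simp only [hp.eq, hp.deriv.eq, sq]
  ring

theorem indexForm_eq_of_eigen {L lam : ℝ} {q u : ℝ → ℝ} (hq : Continuous q)
    (hu : ContDiff ℝ 2 u) (hp : Function.Periodic u L)
    (heq : ∀ s, deriv (deriv u) s + q s * u s + lam * u s = 0) :
    indexForm L q u = lam * ∫ s in (0:ℝ)..L, u s ^ 2 := by
  have hu' : Continuous (deriv u) := hu.continuous_deriv one_le_two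
  have hu₀ := hu.continuous
  have h_eigen : ∀ s, u s * deriv (deriv u) s = -(q s * u s ^ 2) - lam * u s ^ 2 := fun s => by
    linear_combination u s * heq s
  rw [indexForm, integral_sub, integral_deriv_sq_of_periodic hu hp,
    integral_congr fun s _ => h_eigen s, integral_sub, integral_neg, integral_const_mul]
  · ring
  all_goals exact Continuous.intervalIntegrable (by fun_prop) _ _

theorem indexForm_const_mul (L c : ℝ) (q u : ℝ → ℝ) :
    indexForm L q (fun s => c * u s) = c ^ 2 * indexForm L q u := by
  rw [indexForm, indexForm, deriv_const_mul_field', ← integral_const_mul]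
  congr 1 with s
  ring

theorem stmt_17_general (L₁ L₂ : ℝ) (hL₁ : 0 < L₁) (hL₂ : 0 < L₂)
    (q₁ q₂ : ℝ → ℝ) (hq₁ : Continuous q₁) (hq₂ : Continuous q₂)
    (lam₁ lam₂ : ℝ) (hlam₁ : lam₁ ≤ 0) (hlam₂ : lam₂ < 0)
    (φ₁ : ℝ → ℝ) (hφ₁ : ContDiff ℝ 2 φ₁) (hφ₁p : Function.Periodic φ₁ L₁)
    (hφ₁pos : ∀ s, 0 < φ₁ s)
    (hφ₁eq : ∀ s, deriv (deriv φ₁) s + q₁ s * φ₁ s + lam₁ * φ₁ s = 0)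
    (φ₂ : ℝ → ℝ) (hφ₂ : ContDiff ℝ 2 φ₂) (hφ₂p : Function.Periodic φ₂ L₂)
    (hφ₂ne : ∃ s, φ₂ s ≠ 0)
    (hφ₂eq : ∀ s, deriv (deriv φ₂) s + q₂ s * φ₂ s + lam₂ * φ₂ s = 0) :
    ∃ u₁ u₂ : ℝ → ℝ, ContDiff ℝ 2 u₁ ∧ ContDiff ℝ 2 u₂ ∧
      Function.Periodic u₁ L₁ ∧ Function.Periodic u₂ L₂ ∧
      ((∃ s, u₁ s ≠ 0) ∨ (∃ s, u₂ s ≠ 0)) ∧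
      (∫ s in (0:ℝ)..L₁, u₁ s) + (∫ s in (0:ℝ)..L₂, u₂ s) = 0 ∧
      (∫ s in (0:ℝ)..L₁, ((deriv u₁ s) ^ 2 - q₁ s * (u₁ s) ^ 2)) +
        (∫ s in (0:ℝ)..L₂, ((deriv u₂ s) ^ 2 - q₂ s * (u₂ s) ^ 2)) < 0 := by
  have hmean₁ : 0 < ∫ s in (0:ℝ)..L₁, φ₁ s :=
    intervalIntegral_pos_of_pos (hφ₁.continuous.intervalIntegrable 0 L₁) hφ₁pos hL₁
  obtain ⟨c, hc⟩ : ∃ c, c * ∫ s in (0:ℝ)..L₁, φ₁ s = -∫ s in (0:ℝ)..L₂, φ₂ s :=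
    ⟨_, div_mul_cancel₀ _ hmean₁.ne'⟩
  refine ⟨fun s => c * φ₁ s, φ₂, contDiff_const.mul hφ₁, hφ₂, hφ₁p.smul c,
    hφ₂p, Or.inr hφ₂ne, ?_, ?_⟩
  · rw [integral_const_mul, hc, neg_add_cancel]
  · change indexForm L₁ q₁ (fun s => c * φ₁ s) + indexForm L₂ q₂ φ₂ < 0
    rw [indexForm_const_mul, indexForm_eq_of_eigen hq₁ hφ₁ hφ₁p hφ₁eq,
      indexForm_eq_of_eigen hq₂ hφ₂ hφ₂p hφ₂eq]
    have hsq₁ : 0 ≤ ∫ s in (0:ℝ)..L₁, φ₁ s ^ 2 := integral_nonneg hL₁.le fun s _ => sq_nonneg _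
    have hsq₂ := integral_sq_pos_of_periodic hL₂ hφ₂.continuous hφ₂p hφ₂ne
    exact add_neg_of_nonpos_of_neg
      (mul_nonpos_of_nonneg_of_nonpos (sq_nonneg c) (mul_nonpos_of_nonpos_of_nonneg hlam₁ hsq₁))
      (mul_neg_of_neg_of_pos hlam₂ hsq₂)

/-- The gluing argument of the Main Theorem: if the Jacobi operator on one
boundary component has a positive eigenfunction with eigenvalue `λ₁ ≤ 0`, and
on the other a nontrivial eigenfunction with eigenvalue `λ₂ < 0`, then there
is a pair of periodic functions with total mean zero making the index form
negative (so the union of the two curves is unstable). -/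
theorem stmt_17 (L₁ L₂ : ℝ) (hL₁ : 0 < L₁) (hL₂ : 0 < L₂)
    (q₁ q₂ : ℝ → ℝ) (hq₁ : Continuous q₁) (hq₂ : Continuous q₂)
    (hq₁p : Function.Periodic q₁ L₁) (hq₂p : Function.Periodic q₂ L₂)
    (lam₁ lam₂ : ℝ) (hlam₁ : lam₁ ≤ 0) (hlam₂ : lam₂ < 0)
    (φ₁ : ℝ → ℝ) (hφ₁ : ContDiff ℝ 2 φ₁) (hφ₁p : Function.Periodic φ₁ L₁)
    (hφ₁pos : ∀ s, 0 < φ₁ s)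
    (hφ₁eq : ∀ s, deriv (deriv φ₁) s + q₁ s * φ₁ s + lam₁ * φ₁ s = 0)
    (φ₂ : ℝ → ℝ) (hφ₂ : ContDiff ℝ 2 φ₂) (hφ₂p : Function.Periodic φ₂ L₂)
    (hφ₂ne : ∃ s, φ₂ s ≠ 0)
    (hφ₂eq : ∀ s, deriv (deriv φ₂) s + q₂ s * φ₂ s + lam₂ * φ₂ s = 0) :
    ∃ u₁ u₂ : ℝ → ℝ, ContDiff ℝ 2 u₁ ∧ ContDiff ℝ 2 u₂ ∧
      Function.Periodic u₁ L₁ ∧ Function.Periodic u₂ L₂ ∧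
      ((∃ s, u₁ s ≠ 0) ∨ (∃ s, u₂ s ≠ 0)) ∧
      (∫ s in (0:ℝ)..L₁, u₁ s) + (∫ s in (0:ℝ)..L₂, u₂ s) = 0 ∧
      (∫ s in (0:ℝ)..L₁, ((deriv u₁ s) ^ 2 - q₁ s * (u₁ s) ^ 2)) +
        (∫ s in (0:ℝ)..L₂, ((deriv u₂ s) ^ 2 - q₂ s * (u₂ s) ^ 2)) < 0 :=
  stmt_17_general L₁ L₂ hL₁ hL₂ q₁ q₂ hq₁ hq₂ lam₁ lam₂ hlam₁ hlam₂ φ₁ hφ₁ hφ₁p hφ₁pos hφ₁eq φ₂ hφ₂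
    hφ₂p hφ₂ne hφ₂eq
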